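/- The relations P₁₂ P₂₃ K₁₂ = θ₀ P₁₃ K₁₂ and P₁₂ K₂₃ K₁₂ = θ₀ K₁₃ K₁₂ hold in the triple graded tensor product. -/

import Mathlib

/-!
Left multiplication by `P₁₂`, `P₂₃` or `P₁₃` permutes the tensor factors of the row index up to
a sign, and in `K₂₃ K₁₂` and `K₁₃ K₁₂` only one intermediate index contributes to each entry.
Hence every entry of each side of both relations is a single signed product of entries of `P` and
`K`. The two sides are supported on the same entries because `ī` is an involution, and their signs
agree because `θ_ī = θ₀ (-1)^[i] θ_i` (this is where `N` even enters) while the Koszul signs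
depend only on the grades of three indices.
-/

open Matrix BigOperators Finset

noncomputable section

namespace OspYangian

variable (M N : ℕ) (θ₀ : ℤ)

/-- The grading exponent `[i] ∈ {0,1}`, defined so that `(-1)^[i] = θ₀` for `i < M`
and `(-1)^[i] = -θ₀` for `M ≤ i < M+N` (0-indexed). -/
def gr (i : Fin (M + N)) : ℕ :=
  if (i : ℕ) < M then (if θ₀ = 1 then 0 else 1) else (if θ₀ = 1 then 1 else 0)

/-- The sign `θ_i`: `+1` for `i < M + N/2`, `-1` otherwise (0-indexed). -/
def th (i : Fin (M + N)) : ℂ :=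
  if (i : ℕ) < M + N / 2 then 1 else -1

/-- The conjugate index `ī`: `M+1-i` resp. `2M+N+1-i` in 1-indexed notation. -/
def bar (i : Fin (M + N)) : Fin (M + N) :=
  if _h : (i : ℕ) < M then ⟨M - 1 - (i : ℕ), by omega⟩
  else ⟨2 * M + N - 1 - (i : ℕ), by have := i.isLt; omega⟩

/-- Coefficient matrices of elements of the graded tensor square of `gl(M|N)`:
the entry at `((i,k),(j,l))` is the coefficient of `E_{ij} ⊗ E_{kl}`. -/
abbrev Mat := Matrix (Fin (M + N) × Fin (M + N)) (Fin (M + N) × Fin (M + N)) ℂ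

/-- Multiplication in the graded tensor product algebra:
`(A⊗B)(C⊗D) = (-1)^{[B][C]} AC ⊗ BD` on homogeneous elements. -/
def gmul (A B : Mat M N) : Mat M N := fun p q =>
  ∑ j : Fin (M + N), ∑ l : Fin (M + N),
    (-1 : ℂ) ^ ((gr M N θ₀ p.2 + gr M N θ₀ l) * (gr M N θ₀ j + gr M N θ₀ q.1)) *
      A p (j, l) * B (j, l) q

/-- The superpermutation `P = Σ_{i,j} (-1)^{[j]} E_{ij} ⊗ E_{ji}`. -/
def P : Mat M N := fun p q =>
  if p.1 = q.2 ∧ p.2 = q.1 then (-1 : ℂ) ^ gr M N θ₀ p.2 else 0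

/-- `K = Σ_{i,j} (-1)^{[i][j]} θ_i θ_j E_{j̄ ī} ⊗ E_{ji}`. -/
def K : Mat M N := fun p q =>
  if p.1 = bar M N p.2 ∧ q.1 = bar M N q.2 then
    (-1 : ℂ) ^ (gr M N θ₀ q.2 * gr M N θ₀ p.2) * th M N q.2 * th M N p.2
  else 0

/-- Coefficient matrices of elements of the graded triple tensor product. -/
abbrev Mat3 := Matrix (Fin (M + N) × Fin (M + N) × Fin (M + N))
  (Fin (M + N) × Fin (M + N) × Fin (M + N)) ℂ

/-- Multiplication in the graded triple tensor product algebra: the sign is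
`(-1)^{(d₂+d₃)e₁ + d₃e₂}` where `d_a`, `e_a` are the degrees of the `a`-th factors. -/
def gmul3 (A B : Mat3 M N) : Mat3 M N := fun p q =>
  ∑ m : Fin (M + N) × Fin (M + N) × Fin (M + N),
    (-1 : ℂ) ^ ((gr M N θ₀ p.2.1 + gr M N θ₀ m.2.1 + gr M N θ₀ p.2.2 + gr M N θ₀ m.2.2) *
          (gr M N θ₀ m.1 + gr M N θ₀ q.1) +
        (gr M N θ₀ p.2.2 + gr M N θ₀ m.2.2) * (gr M N θ₀ m.2.1 + gr M N θ₀ q.2.1)) *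
      A p m * B m q

/-- Embedding `X ↦ X₁₂ = X ⊗ I` into the triple tensor product. -/
def emb12 (X : Mat M N) : Mat3 M N := fun p q =>
  if p.2.2 = q.2.2 then X (p.1, p.2.1) (q.1, q.2.1) else 0

/-- Embedding `X ↦ X₁₃` into the triple tensor product. -/
def emb13 (X : Mat M N) : Mat3 M N := fun p q =>
  if p.2.1 = q.2.1 then X (p.1, p.2.2) (q.1, q.2.2) else 0

/-- Embedding `X ↦ X₂₃ = I ⊗ X` into the triple tensor product. -/
def emb23 (X : Mat M N) : Mat3 M N := fun p q =>
  if p.1 = q.1 then X p.2 q.2 else 0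

lemma coe_bar (i : Fin (M + N)) :
    (bar M N i : ℕ) = if (i : ℕ) < M then M - 1 - i else 2 * M + N - 1 - i := by
  unfold bar; split <;> rfl

lemma bar_involutive : Function.Involutive (bar M N) := fun i => by
  have := i.isLt
  ext
  rw [coe_bar, coe_bar]
  split_ifs <;> omega

lemma eq_bar_comm {i j : Fin (M + N)} : i = bar M N j ↔ j = bar M N i :=
  (bar_involutive M N).eq_iff.symm.trans eq_comm

lemma gr_bar (i : Fin (M + N)) : gr M N θ₀ (bar M N i) = gr M N θ₀ i := by
  have := i.isLt
  unfold gr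
  rw [coe_bar]
  split_ifs <;> first | rfl | omega

lemma gr_eq_zero_or_one (i : Fin (M + N)) : gr M N θ₀ i = 0 ∨ gr M N θ₀ i = 1 := by
  unfold gr; split_ifs <;> simp

lemma th_bar (hθ : θ₀ = 1 ∨ θ₀ = -1) (hN : Even N) (i : Fin (M + N)) :
    th M N (bar M N i) = θ₀ * (-1) ^ gr M N θ₀ i * th M N i := by
  obtain ⟨k, rfl⟩ := hN
  have := i.isLt
  unfold th gr
  rw [coe_bar]
  rcases hθ with rfl | rfl <;> split_ifs <;> first | contradiction | omega | norm_num

def koszul3 (p m q : Fin (M + N) × Fin (M + N) × Fin (M + N)) : ℕ :=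
  (gr M N θ₀ p.2.1 + gr M N θ₀ m.2.1 + gr M N θ₀ p.2.2 + gr M N θ₀ m.2.2) *
      (gr M N θ₀ m.1 + gr M N θ₀ q.1) +
    (gr M N θ₀ p.2.2 + gr M N θ₀ m.2.2) * (gr M N θ₀ m.2.1 + gr M N θ₀ q.2.1)

lemma gmul3_apply_eq_single (A B : Mat3 M N) (p q m₀ : Fin (M + N) × Fin (M + N) × Fin (M + N))
    (h : ∀ m, m ≠ m₀ → A p m = 0 ∨ B m q = 0) :
    gmul3 M N θ₀ A B p q = (-1) ^ koszul3 M N θ₀ p m₀ q * A p m₀ * B m₀ q := by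
  refine Fintype.sum_eq_single m₀ fun m hm => ?_
  rcases h m hm with h0 | h0 <;> simp [h0]

lemma K_apply_eq_zero_of_ne (p q : Fin (M + N) × Fin (M + N)) (h : q.1 ≠ bar M N q.2) :
    K M N θ₀ p q = 0 :=
  if_neg fun h' => h h'.2

section Products

variable (p q : Fin (M + N) × Fin (M + N) × Fin (M + N))

lemma emb12_P_mul_apply (B : Mat3 M N) :
    gmul3 M N θ₀ (emb12 M N (P M N θ₀)) B p q =
      (-1) ^ koszul3 M N θ₀ p (p.2.1, p.1, p.2.2) q * (-1) ^ gr M N θ₀ p.2.1 *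
        B (p.2.1, p.1, p.2.2) q := by
  rw [gmul3_apply_eq_single M N θ₀ _ _ p q (p.2.1, p.1, p.2.2) fun m hm => Or.inl ?_]
  · simp [emb12, P]
  · obtain ⟨m₁, m₂, m₃⟩ := m
    simp only [emb12, P]
    grind

lemma emb23_P_mul_apply (B : Mat3 M N) :
    gmul3 M N θ₀ (emb23 M N (P M N θ₀)) B p q =
      (-1) ^ koszul3 M N θ₀ p (p.1, p.2.2, p.2.1) q * (-1) ^ gr M N θ₀ p.2.2 *
        B (p.1, p.2.2, p.2.1) q := by
  rw [gmul3_apply_eq_single M N θ₀ _ _ p q (p.1, p.2.2, p.2.1) fun m hm => Or.inl ?_]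
  · simp [emb23, P]
  · obtain ⟨m₁, m₂, m₃⟩ := m
    simp only [emb23, P]
    grind

lemma emb13_P_mul_apply (B : Mat3 M N) :
    gmul3 M N θ₀ (emb13 M N (P M N θ₀)) B p q =
      (-1) ^ koszul3 M N θ₀ p (p.2.2, p.2.1, p.1) q * (-1) ^ gr M N θ₀ p.2.2 *
        B (p.2.2, p.2.1, p.1) q := by
  rw [gmul3_apply_eq_single M N θ₀ _ _ p q (p.2.2, p.2.1, p.1) fun m hm => Or.inl ?_]
  · simp [emb13, P]
  · obtain ⟨m₁, m₂, m₃⟩ := m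
    simp only [emb13, P]
    grind

lemma emb23_K_mul_emb12_K_apply :
    gmul3 M N θ₀ (emb23 M N (K M N θ₀)) (emb12 M N (K M N θ₀)) p q =
      (-1) ^ koszul3 M N θ₀ p (p.1, bar M N q.2.2, q.2.2) q *
        K M N θ₀ p.2 (bar M N q.2.2, q.2.2) * K M N θ₀ (p.1, bar M N q.2.2) (q.1, q.2.1) := by
  rw [gmul3_apply_eq_single M N θ₀ _ _ p q (p.1, bar M N q.2.2, q.2.2) fun m hm => ?_]
  · simp [emb12, emb23]
  · obtain ⟨m₁, m₂, m₃⟩ := m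
    by_cases h₁ : p.1 = m₁
    · by_cases h₃ : m₃ = q.2.2
      · left
        rw [emb23, if_pos h₁]
        exact K_apply_eq_zero_of_ne M N θ₀ _ _ (by grind)
      · exact Or.inr (if_neg h₃)
    · exact Or.inl (if_neg h₁)

lemma emb13_K_mul_emb12_K_apply :
    gmul3 M N θ₀ (emb13 M N (K M N θ₀)) (emb12 M N (K M N θ₀)) p q =
      (-1) ^ koszul3 M N θ₀ p (bar M N q.2.2, p.2.1, q.2.2) q *
        K M N θ₀ (p.1, p.2.2) (bar M N q.2.2, q.2.2) *
          K M N θ₀ (bar M N q.2.2, p.2.1) (q.1, q.2.1) := by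
  rw [gmul3_apply_eq_single M N θ₀ _ _ p q (bar M N q.2.2, p.2.1, q.2.2) fun m hm => ?_]
  · simp [emb12, emb13]
  · obtain ⟨m₁, m₂, m₃⟩ := m
    by_cases h₂ : p.2.1 = m₂
    · by_cases h₃ : m₃ = q.2.2
      · left
        rw [emb13, if_pos h₂]
        exact K_apply_eq_zero_of_ne M N θ₀ _ _ (by grind)
      · exact Or.inr (if_neg h₃)
    · exact Or.inl (if_neg h₂)

end Products

lemma P12_P23_K12_apply (hθ : θ₀ = 1 ∨ θ₀ = -1) (hN : Even N)
    (p q : Fin (M + N) × Fin (M + N) × Fin (M + N)) :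
    gmul3 M N θ₀ (emb12 M N (P M N θ₀))
        (gmul3 M N θ₀ (emb23 M N (P M N θ₀)) (emb12 M N (K M N θ₀))) p q =
      θ₀ * gmul3 M N θ₀ (emb13 M N (P M N θ₀)) (emb12 M N (K M N θ₀)) p q := by
  obtain ⟨a, b, c⟩ := p
  obtain ⟨d, e, f⟩ := q
  rw [emb12_P_mul_apply, emb23_P_mul_apply, emb13_P_mul_apply]
  simp only [emb12, K, eq_bar_comm (i := c)]
  split_ifs with h₁ h₂
  · obtain ⟨rfl, rfl, rfl⟩ : a = f ∧ b = bar M N c ∧ d = bar M N e := ⟨h₁, h₂⟩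
    simp only [koszul3, gr_bar, th_bar M N θ₀ hθ hN]
    rcases gr_eq_zero_or_one M N θ₀ a with ha | ha <;>
      rcases gr_eq_zero_or_one M N θ₀ c with hc | hc <;>
      rcases gr_eq_zero_or_one M N θ₀ e with he | he <;>
      simp only [ha, hc, he] <;> rcases hθ with rfl | rfl <;> norm_num
  all_goals simp

lemma P12_K23_K12_apply (hθ : θ₀ = 1 ∨ θ₀ = -1) (hN : Even N)
    (p q : Fin (M + N) × Fin (M + N) × Fin (M + N)) :
    gmul3 M N θ₀ (emb12 M N (P M N θ₀))
        (gmul3 M N θ₀ (emb23 M N (K M N θ₀)) (emb12 M N (K M N θ₀))) p q =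
      θ₀ * gmul3 M N θ₀ (emb13 M N (K M N θ₀)) (emb12 M N (K M N θ₀)) p q := by
  obtain ⟨a, b, c⟩ := p
  obtain ⟨d, e, f⟩ := q
  rw [emb12_P_mul_apply, emb23_K_mul_emb12_K_apply, emb13_K_mul_emb12_K_apply]
  simp only [K, (bar_involutive M N).injective.eq_iff, (bar_involutive M N) _, eq_comm (a := f),
    and_true]
  split_ifs with h₁ h₂
  · obtain ⟨rfl, rfl, rfl⟩ : a = bar M N c ∧ b = f ∧ d = bar M N e := ⟨h₁, h₂⟩
    simp only [koszul3, gr_bar, th_bar M N θ₀ hθ hN]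
    rcases gr_eq_zero_or_one M N θ₀ b with hb | hb <;>
      rcases gr_eq_zero_or_one M N θ₀ c with hc | hc <;>
      rcases gr_eq_zero_or_one M N θ₀ e with he | he <;>
      simp only [hb, hc, he] <;> rcases hθ with rfl | rfl <;> norm_num
  all_goals simp

/-- `P₁₂ P₂₃ K₁₂ = θ₀ P₁₃ K₁₂` and `P₁₂ K₂₃ K₁₂ = θ₀ K₁₃ K₁₂`. -/
theorem statement7 (hθ : θ₀ = 1 ∨ θ₀ = -1) (hN : Even N) :
    gmul3 M N θ₀ (emb12 M N (P M N θ₀))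
        (gmul3 M N θ₀ (emb23 M N (P M N θ₀)) (emb12 M N (K M N θ₀))) =
      (θ₀ : ℂ) • gmul3 M N θ₀ (emb13 M N (P M N θ₀)) (emb12 M N (K M N θ₀)) ∧
    gmul3 M N θ₀ (emb12 M N (P M N θ₀))
        (gmul3 M N θ₀ (emb23 M N (K M N θ₀)) (emb12 M N (K M N θ₀))) =
      (θ₀ : ℂ) • gmul3 M N θ₀ (emb13 M N (K M N θ₀)) (emb12 M N (K M N θ₀)) :=
  ⟨Matrix.ext (P12_P23_K12_apply M N θ₀ hθ hN), Matrix.ext (P12_K23_K12_apply M N θ₀ hθ hN)⟩
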